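/- arXiv:1810.02946 — 5 statements merged into one kernel-verified Lean document; each statement's English description precedes it below -/
import Mathlib

section
/- In the ring of formal power series in w over ℚ, one has the identity (e^w − 1)^2 · ( 1 − Σ_{n≥0} (B_{n+2}/(n+2)) · w^{n+2}/n! ) = w^2 · e^w, where e^w denotes the exponential power series Σ_{n≥0} w^n/n!. (Equivalently, e^w/(e^w−1)^2 = 1/w^2 − Σ_{n≥0} (B_{n+2}/(n+2)) w^n/n!.) -/
/-!
Write `B = w/(e^w - 1)` for the exponential generating function of the Bernoulli numbers.
The series in the statement is `B - w B'`, since `w B'` multiplies the `n`-th coefficient by `n`.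
Differentiating `B (e^w - 1) = w` gives `B' (e^w - 1) + B e^w = 1`, and eliminating `B'` between
these two identities yields `(e^w - 1)^2 (B - w B') = w^2 e^w`.
-/

open PowerSeries

lemma PowerSeries.sq_mul_sub_X_mul_derivative_eq {R : Type*} [CommRing R] (f g : R⟦X⟧)
    (hfg : f * g = X) (hg : d⁄dX R g = g + 1) :
    g ^ 2 * (f - X * d⁄dX R f) = X ^ 2 * (g + 1) := by
  have hderiv : d⁄dX R f * g + f * (g + 1) = 1 := by
    have h := congrArg (d⁄dX R) hfg
    rwa [Derivation.leibniz, hg, derivative_X, smul_eq_mul, smul_eq_mul, add_comm,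
      mul_comm g] at h
  linear_combination (g + X * (g + 1)) * hfg - X * g * hderiv

lemma PowerSeries.coeff_sub_X_mul_derivative {R : Type*} [CommRing R] (f : R⟦X⟧) (n : ℕ) :
    coeff n (f - X * d⁄dX R f) = (1 - n) * coeff n f := by
  cases n with
  | zero => simp
  | succ n =>
    rw [map_sub, coeff_succ_X_mul, coeff_derivative]
    push_cast
    ring

lemma mk_bernoulli_eq_bernoulliPowerSeries_sub_X_mul_derivative :
    PowerSeries.mk (fun m : ℕ =>
        if m = 0 then (1 : ℚ)
        else if m = 1 then 0
        else -(bernoulli m / ((m : ℚ) * (Nat.factorial (m - 2) : ℚ)))) =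
      bernoulliPowerSeries ℚ - X * d⁄dX ℚ (bernoulliPowerSeries ℚ) := by
  ext n
  rw [coeff_sub_X_mul_derivative, coeff_mk, bernoulliPowerSeries, coeff_mk,
    Algebra.algebraMap_self, RingHom.id_apply]
  match n with
  | 0 => simp
  | 1 => simp
  | m + 2 =>
    rw [if_neg (by omega), if_neg (by omega), Nat.add_sub_cancel, Nat.factorial_succ,
      Nat.factorial_succ]
    push_cast
    field_simp
    ring

/-- In `ℚ⟦w⟧`: `(e^w − 1)^2 · (1 − Σ_{n≥0} (B_{n+2}/(n+2)) · w^{n+2}/n!) = w^2 · e^w`,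
where `B_k` are the Bernoulli numbers (with `B_1 = −1/2`). -/
theorem stmt0 :
    (PowerSeries.exp ℚ - 1) ^ 2 *
      PowerSeries.mk (fun m : ℕ =>
        if m = 0 then (1 : ℚ)
        else if m = 1 then 0
        else -(bernoulli m / ((m : ℚ) * (Nat.factorial (m - 2) : ℚ)))) =
    PowerSeries.X ^ 2 * PowerSeries.exp ℚ := by
  rw [mk_bernoulli_eq_bernoulliPowerSeries_sub_X_mul_derivative]
  have hexp : d⁄dX ℚ (exp ℚ - 1) = exp ℚ - 1 + 1 := by
    rw [map_sub, derivative_exp, Derivation.map_one_eq_zero, sub_zero, sub_add_cancel]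
  simpa using sq_mul_sub_X_mul_derivative_eq _ _ (bernoulliPowerSeries_mul_exp_sub_one ℚ) hexp
end

section
/- In the ring of formal power series in w with coefficients in the polynomial ring ℚ[t], one has the identity (e^w − 1)^2 · ( 1 + t·w + Σ_{n≥0} ( t·B_{n+1}(t)/(n+1) − B_{n+2}(t)/(n+2) ) · w^{n+2}/n! ) = w^2 · Σ_{n≥0} (1+t)^n w^n/n!. (Equivalently, e^{(1+t)w}/(e^w−1)^2 = 1/w^2 + t/w + Σ_{n≥0} { t·B_{n+1}(t)/(n+1) − B_{n+2}(t)/(n+2) } w^n/n!.) -/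
/-!
With `A(w) = Σ B_n(t) wⁿ/n!`, the bracketed series equals `A + t w A − w A'`. Differentiating the
generating-function identity `(eʷ − 1) A = w e^{tw}` gives `(eʷ − 1) A' = (1 + t w) e^{tw} − eʷ A`,
so `(eʷ − 1)(A + t w A − w A') = w eʷ A`; one more factor `eʷ − 1` turns this into
`w² e^{(1+t)w}`.
-/

open PowerSeries

namespace PowerSeries

variable {R : Type*} [CommRing R]

theorem derivative_rescale (a : R) (f : R⟦X⟧) :
    d⁄dX R (rescale a f) = C a * rescale a (d⁄dX R f) := by
  ext n
  simp only [coeff_derivative, coeff_rescale, coeff_C_mul]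
  ring

theorem derivative_rescale_exp [Algebra ℚ R] (a : R) :
    d⁄dX R (rescale a (exp R)) = C a * rescale a (exp R) := by
  rw [derivative_rescale, derivative_exp]

theorem sub_one_sq_mul_eq_X_sq_mul {E A G : R⟦X⟧} (t : R) (hE : d⁄dX R E = E)
    (hG : d⁄dX R G = C t * G) (hA : A * (E - 1) = X * G) :
    (E - 1) ^ 2 * (C t * X * A + A - X * d⁄dX R A) = X ^ 2 * (E * G) := by
  have hA' := congrArg (d⁄dX R) hA
  simp only [Derivation.leibniz, smul_eq_mul, map_sub, Derivation.map_one_eq_zero, hE, hG,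
    derivative_X, sub_zero] at hA'
  linear_combination (C t * X * (E - 1) + (E - 1) + X * E) * hA - (X * (E - 1)) * hA'

end PowerSeries

noncomputable def bernoulliSeries : (Polynomial ℚ)⟦X⟧ :=
  mk fun n => Polynomial.C ((n.factorial : ℚ)⁻¹) * Polynomial.bernoulli n

theorem bernoulliSeries_mul_exp_sub_one :
    bernoulliSeries * (exp (Polynomial ℚ) - 1) =
      X * rescale Polynomial.X (exp (Polynomial ℚ)) := by
  convert Polynomial.bernoulli_generating_function (Polynomial.X : Polynomial ℚ) using 3 with n
  simp [bernoulliSeries, Polynomial.smul_eq_C_mul]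

theorem coeff_add_two_bernoulliSeries_combination (k : ℕ) :
    coeff (k + 2) (C Polynomial.X * X * bernoulliSeries + bernoulliSeries
        - X * d⁄dX (Polynomial ℚ) bernoulliSeries) =
      (Polynomial.X * Polynomial.bernoulli (k + 1) * Polynomial.C (((k + 1 : ℕ) : ℚ)⁻¹)
        - Polynomial.bernoulli (k + 2) * Polynomial.C (((k + 2 : ℕ) : ℚ)⁻¹))
        * Polynomial.C ((k.factorial : ℚ)⁻¹) := by
  simp only [bernoulliSeries, map_add, map_sub, mul_assoc, coeff_C_mul, coeff_succ_X_mul,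
    coeff_derivative, coeff_mk]
  have h1 : ((k + 1 : ℕ) : ℚ)⁻¹ * (k.factorial : ℚ)⁻¹ = ((k + 1).factorial : ℚ)⁻¹ := by
    simp [Nat.factorial_succ, mul_comm]
  have h2 : ((k + 2 : ℕ) : ℚ)⁻¹ * (k.factorial : ℚ)⁻¹ =
      ((k + 2).factorial : ℚ)⁻¹ * (k + 1 : ℕ) := by
    simp only [Nat.factorial_succ]
    push_cast
    field_simp
    ring
  replace h1 := congrArg Polynomial.C h1
  replace h2 := congrArg Polynomial.C h2
  simp only [map_mul, Polynomial.C_eq_natCast] at h1 h2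
  push_cast at h1 h2 ⊢
  linear_combination Polynomial.bernoulli (k + 2) * h2
    - (Polynomial.X * Polynomial.bernoulli (k + 1)) * h1

theorem mk_eq_bernoulliSeries_combination :
    mk (fun m : ℕ =>
        if m = 0 then (1 : Polynomial ℚ)
        else if m = 1 then Polynomial.X
        else (Polynomial.X * Polynomial.bernoulli (m - 1) * Polynomial.C (((m - 1 : ℕ) : ℚ)⁻¹)
              - Polynomial.bernoulli m * Polynomial.C (((m : ℕ) : ℚ)⁻¹))
             * Polynomial.C ((Nat.factorial (m - 2) : ℚ)⁻¹)) =
      C Polynomial.X * X * bernoulliSeries + bernoulliSeries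
        - X * d⁄dX (Polynomial ℚ) bernoulliSeries := by
  refine PowerSeries.ext fun m => ?_
  rcases m with _ | _ | k
  · simp [bernoulliSeries]
  · simp [bernoulliSeries, coeff_derivative, mul_assoc, coeff_C_mul]
  · rw [coeff_mk, if_neg (by omega), if_neg (by omega)]
    exact (coeff_add_two_bernoulliSeries_combination k).symm

/-- In `ℚ[t]⟦w⟧`:
`(e^w − 1)^2 · (1 + t·w + Σ_{n≥0} (t·B_{n+1}(t)/(n+1) − B_{n+2}(t)/(n+2)) · w^{n+2}/n!)
  = w^2 · e^{(1+t)w}`,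
where `B_k(t)` are the Bernoulli polynomials (with `B_1(0) = −1/2`). -/
theorem stmt1 :
    ((PowerSeries.mk (fun n : ℕ => Polynomial.C ((Nat.factorial n : ℚ)⁻¹)) :
        PowerSeries (Polynomial ℚ)) - 1) ^ 2 *
      PowerSeries.mk (fun m : ℕ =>
        if m = 0 then (1 : Polynomial ℚ)
        else if m = 1 then Polynomial.X
        else (Polynomial.X * Polynomial.bernoulli (m - 1) * Polynomial.C (((m - 1 : ℕ) : ℚ)⁻¹)
              - Polynomial.bernoulli m * Polynomial.C (((m : ℕ) : ℚ)⁻¹))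
             * Polynomial.C ((Nat.factorial (m - 2) : ℚ)⁻¹)) =
    PowerSeries.X ^ 2 *
      PowerSeries.mk (fun n : ℕ =>
        (1 + Polynomial.X) ^ n * Polynomial.C ((Nat.factorial n : ℚ)⁻¹)) := by
  have hE : (mk fun n : ℕ => Polynomial.C ((n.factorial : ℚ)⁻¹)) = exp (Polynomial ℚ) := by
    ext n
    simp [coeff_exp]
  have hG : (mk fun n : ℕ => (1 + Polynomial.X) ^ n * Polynomial.C ((n.factorial : ℚ)⁻¹)) =
      rescale 1 (exp (Polynomial ℚ)) * rescale Polynomial.X (exp (Polynomial ℚ)) := by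
    rw [exp_mul_exp_eq_exp_add]
    refine PowerSeries.ext fun n => ?_
    simp [coeff_rescale, coeff_exp]
  rw [hE, hG, rescale_one, RingHom.id_apply, mk_eq_bernoulliSeries_combination]
  exact sub_one_sq_mul_eq_X_sq_mul Polynomial.X (derivative_exp _) (derivative_rescale_exp _)
    bernoulliSeries_mul_exp_sub_one
end

section
/- Let μ ∈ ℝ and consider λ ∈ ℝ with λ + μ > 0. Define G_0(λ) = ((λ+μ)²/2)·log(λ+μ) − (3/4)(λ+μ)², G_1(λ) = −(1/12)·log(λ+μ), and G_g(λ) = (B_{2g}/(2g(2g−2)))·(λ+μ)^{2−2g} for g ≥ 2. Then for every integer n ≥ 1 and every λ with λ+μ > 0, Σ_{k=1}^{n} (2/(2k)!) · G_{n−k}^{(2k)}(λ) = log(λ+μ) if n = 1, and = 0 if n ≥ 2. (That is, the formal series F(λ;ℏ) = Σ_{g≥0} ℏ^{2g−2} G_g(λ) solves the difference equation F(λ+ℏ) − 2F(λ) + F(λ−ℏ) = log(λ+μ) order by order in ℏ.) -/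
/-!
Every iterated derivative `G_g^{(m)}` with `2g + m ≥ 2` is the multiple
`a_g = (1 - 2g) B_{2g} / (2g)!` of `log^{(2g+m-2)}(λ + μ)`: for `g = 0` because `G_0'' = log`,
for `g = 1` trivially, and for `g ≥ 2` because `log^{(2g-2)}` is a multiple of `x^{2-2g}`.
So the order-`n` coefficient is `log^{(2n-2)}(λ + μ) · 2 Σ_k a_{n-k} / (2k)!`, and after
multiplying by `(2n)!/2` that Bernoulli sum becomes `Σ_g C(2n,2g) B_{2g} (1 - 2g)`.
Since the odd Bernoulli numbers past `B_1` vanish and the factor `k - 1` kills `B_1`, this is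
`Σ_{k<2n} C(2n,k) B_k (1 - k)`, which `k C(N+1,k) = (N+1)(C(N+1,k) - C(N,k))` and the
recursion `Σ_{k<N} C(N,k) B_k = 0` reduce to `2n B_{2n-1}`, zero for `n ≥ 2`.
-/

open Finset Real
open scoped Nat

theorem sum_choose_mul_bernoulli_mul_sub_one (N : ℕ) (hN : 2 ≤ N) :
    ∑ k ∈ range (N + 1), ((N + 1).choose k : ℚ) * bernoulli k * (k - 1)
      = -(N + 1) * bernoulli N := by
  have hweight : ∀ k ∈ range (N + 1),
      ((N + 1).choose k : ℚ) * k = (N + 1) * (((N + 1).choose k : ℚ) - N.choose k) := by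
    intro k hk
    have h : (N.choose k * (N + 1) : ℚ) = (N + 1).choose k * ((N + 1 : ℕ) - k : ℕ) := by
      exact_mod_cast Nat.choose_mul_succ_eq N k
    rw [Nat.cast_sub (by simp at hk; omega)] at h
    push_cast at h
    linear_combination h
  have hN' : ∑ k ∈ range (N + 1), (N.choose k : ℚ) * bernoulli k = bernoulli N := by
    rw [sum_range_succ, sum_bernoulli, if_neg (by omega)]
    simp
  calc ∑ k ∈ range (N + 1), ((N + 1).choose k : ℚ) * bernoulli k * (k - 1)
      = ∑ k ∈ range (N + 1), ((N + 1) * (((N + 1).choose k : ℚ) * bernoulli k)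
          - (N + 1) * ((N.choose k : ℚ) * bernoulli k)
          - ((N + 1).choose k : ℚ) * bernoulli k) := by
        refine sum_congr rfl fun k hk => ?_
        linear_combination bernoulli k * hweight k hk
    _ = -(N + 1) * bernoulli N := by
        rw [sum_sub_distrib, sum_sub_distrib, ← mul_sum, ← mul_sum, hN']
        have h0 := sum_bernoulli (N + 1)
        rw [if_neg (by omega)] at h0
        rw [h0]; ring

theorem Finset.sum_range_two_mul {M : Type*} [AddCommMonoid M] (f : ℕ → M) (n : ℕ) :
    ∑ k ∈ range (2 * n), f k = ∑ g ∈ range n, (f (2 * g) + f (2 * g + 1)) := by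
  induction n with
  | zero => simp
  | succ n ih => rw [mul_add_one, sum_range_succ, sum_range_succ, sum_range_succ, ih, add_assoc]

theorem sum_choose_two_mul_mul_bernoulli_mul_one_sub (n : ℕ) :
    ∑ g ∈ range n, ((2 * n).choose (2 * g) : ℚ) * bernoulli (2 * g) * (1 - 2 * g)
      = if n = 1 then 1 else 0 := by
  rcases Nat.lt_or_ge n 2 with hn | hn
  · interval_cases n <;> simp
  have hodd : ∀ g,
      ((2 * n).choose (2 * g + 1) : ℚ) * bernoulli (2 * g + 1) * ((2 * g + 1 : ℕ) - 1) = 0 := by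
    intro g
    rcases g.eq_zero_or_pos with rfl | hg
    · simp
    · rw [bernoulli_eq_zero_of_odd (odd_two_mul_add_one g) (by omega)]; simp
  have h := sum_choose_mul_bernoulli_mul_sub_one (2 * n - 1) (by omega)
  rw [Nat.sub_add_cancel (by omega), bernoulli_eq_zero_of_odd ⟨n - 1, by omega⟩ (by omega),
    mul_zero, sum_range_two_mul] at h
  simp only [hodd, add_zero, Nat.cast_mul, Nat.cast_ofNat] at h
  rw [if_neg (by omega), ← neg_eq_zero, ← h, ← sum_neg_distrib]
  refine sum_congr rfl fun g _ => ?_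
  ring

theorem Finset.sum_Icc_one_eq_sum_range_sub {M : Type*} [AddCommMonoid M] (f : ℕ → M)
    (n : ℕ) :
    ∑ k ∈ Icc 1 n, f k = ∑ g ∈ range n, f (n - g) :=
  sum_nbij' (n - ·) (n - ·) (by intro k hk; simp at hk ⊢; omega)
    (by intro g hg; simp at hg ⊢; omega) (by intro k hk; simp at hk; omega)
    (by intro g hg; simp at hg; omega) (by intro k hk; simp at hk; congr; omega)

theorem Real.iteratedDeriv_succ_log (m : ℕ) (x : ℝ) :
    iteratedDeriv (m + 1) log x = (-1) ^ m * m ! * x ^ (-1 - m : ℤ) := by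
  rw [iteratedDeriv_succ', deriv_log', iteratedDeriv_eq_iterate, iter_deriv_inv]

theorem iteratedDeriv_iteratedDeriv {𝕜 F : Type*} [NontriviallyNormedField 𝕜]
    [NormedAddCommGroup F] [NormedSpace 𝕜 F] (m n : ℕ) (f : 𝕜 → F) :
    iteratedDeriv m (iteratedDeriv n f) = iteratedDeriv (m + n) f := by
  simp only [iteratedDeriv_eq_iterate, Function.iterate_add]
  rfl

theorem iteratedDeriv_eq_of_eq_comp_add_const {f F : ℝ → ℝ} {μ x : ℝ}
    (h : ∀ y, 0 < y + μ → f y = F (y + μ)) (hx : 0 < x + μ) (m : ℕ) :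
    iteratedDeriv m f x = iteratedDeriv m F (x + μ) := by
  rw [← congrFun (iteratedDeriv_comp_add_const m F μ) x]
  have hopen : IsOpen {y : ℝ | 0 < y + μ} := isOpen_lt continuous_const (by fun_prop)
  exact (Filter.eventuallyEq_of_mem (hopen.mem_nhds hx) h).iteratedDeriv_eq m

noncomputable def freeEnergy : ℕ → ℝ → ℝ
  | 0, x => x ^ 2 / 2 * log x - 3 / 4 * x ^ 2
  | 1, x => -(1 / 12) * log x
  | g + 2, x => (bernoulli (2 * (g + 2)) : ℝ)
      / (2 * ((g + 2 : ℕ) : ℝ) * (2 * ((g + 2 : ℕ) : ℝ) - 2))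
      * x ^ (2 - 2 * ((g + 2 : ℕ) : ℤ))

noncomputable def genusCoeff (g : ℕ) : ℝ := (1 - 2 * g) * bernoulli (2 * g) / (2 * g)!

theorem deriv_deriv_freeEnergy_zero {x : ℝ} (hx : 0 < x) :
    deriv (deriv (freeEnergy 0)) x = log x := by
  have hderiv : ∀ y, 0 < y → HasDerivAt (freeEnergy 0) (y * log y - y) y := by
    intro y hy
    have h := ((hasDerivAt_pow 2 y).div_const 2).fun_mul (hasDerivAt_log hy.ne') |>.fun_sub
      ((hasDerivAt_pow 2 y).const_mul (3 / 4))
    refine h.congr_deriv ?_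
    field_simp
    ring
  have hderiv2 : HasDerivAt (fun y => y * log y - y) (log x) x := by
    refine ((hasDerivAt_id' x).fun_mul (hasDerivAt_log hx.ne')).fun_sub (hasDerivAt_id' x)
      |>.congr_deriv ?_
    field_simp
    ring
  rw [← hderiv2.deriv]
  exact (Filter.eventuallyEq_of_mem (Ioi_mem_nhds hx) fun y hy => (hderiv y hy).deriv).deriv_eq

theorem freeEnergy_add_two (g : ℕ) :
    freeEnergy (g + 2) = fun x => genusCoeff (g + 2) * iteratedDeriv (2 * g + 2) log x := by
  ext x
  rw [Real.iteratedDeriv_succ_log, freeEnergy, genusCoeff, pow_succ, (even_two_mul g).neg_one_pow,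
    show 2 * (g + 2) = 2 * g + 1 + 1 + 1 + 1 by ring,
    Nat.factorial_succ, Nat.factorial_succ, Nat.factorial_succ,
    show (-1 - ((2 * g + 1 : ℕ) : ℤ)) = 2 - 2 * ((g + 2 : ℕ) : ℤ) by push_cast; ring]
  push_cast
  have : ((2 * g + 1)! : ℝ) ≠ 0 := by positivity
  rw [show 2 * ((g : ℝ) + 2) - 2 = 2 * (g + 1) by ring]
  field_simp
  ring

theorem iteratedDeriv_freeEnergy (g m : ℕ) (hm : 2 ≤ 2 * g + m) {x : ℝ} (hx : 0 < x) :
    iteratedDeriv m (freeEnergy g) x = genusCoeff g * iteratedDeriv (2 * g + m - 2) log x := by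
  match g, m with
  | 0, m + 2 =>
    have hlog : deriv (deriv (freeEnergy 0)) =ᶠ[nhds x] log :=
      Filter.eventuallyEq_of_mem (Ioi_mem_nhds hx) fun y hy => deriv_deriv_freeEnergy_zero hy
    rw [iteratedDeriv_succ', iteratedDeriv_succ', hlog.iteratedDeriv_eq]
    simp [genusCoeff]
  | 1, m =>
    rw [show freeEnergy 1 = fun x => -(1 / 12) * log x from rfl, iteratedDeriv_const_mul_field]
    norm_num [genusCoeff]
  | g + 2, m =>
    rw [freeEnergy_add_two, iteratedDeriv_const_mul_field, iteratedDeriv_iteratedDeriv]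
    congr 2
    omega

theorem sum_two_div_factorial_mul_genusCoeff (n : ℕ) :
    ∑ k ∈ Icc 1 n, 2 / ((2 * k)! : ℝ) * genusCoeff (n - k) = if n = 1 then 1 else 0 := by
  calc ∑ k ∈ Icc 1 n, 2 / ((2 * k)! : ℝ) * genusCoeff (n - k)
      = 2 / ((2 * n)! : ℝ) * ((∑ g ∈ range n,
          ((2 * n).choose (2 * g) : ℚ) * bernoulli (2 * g) * (1 - 2 * g) : ℚ) : ℝ) := by
        rw [sum_Icc_one_eq_sum_range_sub, Rat.cast_sum, mul_sum]
        refine sum_congr rfl fun g hg => ?_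
        simp only [mem_range] at hg
        rw [Nat.sub_sub_self hg.le, genusCoeff]
        push_cast
        rw [Nat.cast_choose ℝ (by omega : 2 * g ≤ 2 * n),
          show 2 * n - 2 * g = 2 * (n - g) by omega]
        field_simp
    _ = if n = 1 then 1 else 0 := by
        rw [sum_choose_two_mul_mul_bernoulli_mul_one_sub]
        split_ifs with hn
        · subst hn; norm_num
        · simp

theorem stmt2_general (μ : ℝ) (G : ℕ → ℝ → ℝ)
    (hG0 : ∀ l : ℝ, 0 < l + μ →
      G 0 l = (l + μ) ^ 2 / 2 * Real.log (l + μ) - 3 / 4 * (l + μ) ^ 2)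
    (hG1 : ∀ l : ℝ, 0 < l + μ → G 1 l = -(1 / 12) * Real.log (l + μ))
    (hGg : ∀ g : ℕ, 2 ≤ g → ∀ l : ℝ, 0 < l + μ →
      G g l = (bernoulli (2 * g) : ℝ) / (2 * (g : ℝ) * (2 * (g : ℝ) - 2))
                * (l + μ) ^ (2 - 2 * (g : ℤ)))
    (n : ℕ) (l : ℝ) (hl : 0 < l + μ) :
    ∑ k ∈ Finset.Icc 1 n,
        2 / (Nat.factorial (2 * k) : ℝ) * iteratedDeriv (2 * k) (G (n - k)) l
      = if n = 1 then Real.log (l + μ) else 0 := by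
  have hG : ∀ g y, 0 < y + μ → G g y = freeEnergy g (y + μ)
    | 0, y, hy => hG0 y hy
    | 1, y, hy => hG1 y hy
    | g + 2, y, hy => hGg (g + 2) (by omega) y hy
  calc ∑ k ∈ Icc 1 n, 2 / ((2 * k)! : ℝ) * iteratedDeriv (2 * k) (G (n - k)) l
      = ∑ k ∈ Icc 1 n, 2 / ((2 * k)! : ℝ) * genusCoeff (n - k)
          * iteratedDeriv (2 * n - 2) log (l + μ) := by
        refine sum_congr rfl fun k hk => ?_
        simp only [mem_Icc] at hk
        rw [iteratedDeriv_eq_of_eq_comp_add_const (hG _) hl,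
          iteratedDeriv_freeEnergy _ _ (by omega) hl,
          show 2 * (n - k) + 2 * k - 2 = 2 * n - 2 by omega, mul_assoc]
    _ = (if n = 1 then 1 else 0) * iteratedDeriv (2 * n - 2) log (l + μ) := by
        rw [← sum_mul, sum_two_div_factorial_mul_genusCoeff]
    _ = if n = 1 then log (l + μ) else 0 := by
        split_ifs with h <;> simp [h]

/-- The formal series `F(λ;ℏ) = Σ_{g≥0} ℏ^{2g−2} G_g(λ)` with
`G_0 = ((λ+μ)²/2)log(λ+μ) − (3/4)(λ+μ)²`, `G_1 = −(1/12)log(λ+μ)`,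
`G_g = (B_{2g}/(2g(2g−2)))(λ+μ)^{2−2g}` (g ≥ 2) solves
`F(λ+ℏ) − 2F(λ) + F(λ−ℏ) = log(λ+μ)` order by order in `ℏ`. -/
theorem stmt2 (μ : ℝ) (G : ℕ → ℝ → ℝ)
    (hG0 : ∀ l : ℝ, 0 < l + μ →
      G 0 l = (l + μ) ^ 2 / 2 * Real.log (l + μ) - 3 / 4 * (l + μ) ^ 2)
    (hG1 : ∀ l : ℝ, 0 < l + μ → G 1 l = -(1 / 12) * Real.log (l + μ))
    (hGg : ∀ g : ℕ, 2 ≤ g → ∀ l : ℝ, 0 < l + μ →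
      G g l = (bernoulli (2 * g) : ℝ) / (2 * (g : ℝ) * (2 * (g : ℝ) - 2))
                * (l + μ) ^ (2 - 2 * (g : ℤ)))
    (n : ℕ) (hn : 1 ≤ n) (l : ℝ) (hl : 0 < l + μ) :
    ∑ k ∈ Finset.Icc 1 n,
        2 / (Nat.factorial (2 * k) : ℝ) * iteratedDeriv (2 * k) (G (n - k)) l
      = if n = 1 then Real.log (l + μ) else 0 :=
  stmt2_general μ G hG0 hG1 hGg n l hl
end

section
/- Let ℏ ∈ ℝ \ {0} and λ₀, λ₁, λ∞, ν_{0+}, ν_{0−}, ν_{1+}, ν_{1−}, ν_{∞+}, ν_{∞−} ∈ ℝ with ν_{0+}+ν_{0−}+ν_{1+}+ν_{1−}+ν_{∞+}+ν_{∞−} = 1. Set ν_j = ν_{j+} − ν_{j−} and λ̂_j = λ_j − ℏν_j/2 for j ∈ {0,1,∞}, and let α = (λ̂₀+λ̂₁+λ̂∞)/ℏ + 1/2, β = (λ̂₀+λ̂₁−λ̂∞)/ℏ + 1/2, γ = 2λ̂₀/ℏ + 1. Suppose φ : (1,∞) → ℝ is twice differentiable and satisfies the standard Gauss hypergeometric equation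 x(1−x)φ''(x) + (γ − (α+β+1)x)φ'(x) − αβ·φ(x) = 0 on (1,∞). Define ψ(x) = x^{λ̂₀/ℏ + (ν_{0+}+ν_{0−})/2} · (x−1)^{λ̂₁/ℏ + (ν_{1+}+ν_{1−})/2} · φ(x). Then ψ satisfies, on (1,∞), the quantum Gauss curve equation ℏ²ψ''(x) + (ℏ q₁(x))·ℏ·ψ'(x) + (r₀(x) + ℏ r₁(x) + ℏ² r₂(x))·ψ(x) = 0, where q₁(x) = (1−ν_{0+}−ν_{0−})/x + (1−ν_{1+}−ν_{1−})/(x−1), r₀(x) = −(λ∞²x² − (λ∞²+λ₀²−λ₁²)x + λ₀²)/(x²(1−x)²), r₁(x) = −(ν_{0+}−ν_{0−})λ₀/(x²(x−1)) + (ν_{1+}−ν_{1−})λ₁/(x(x−1)²) + (ν_{∞+}−ν_{∞−})λ∞/(x(x−1)), and r₂(x) = −ν_{0+}ν_{0−}/(x²(x−1)) + ν_{1+}ν_{1−}/(x(x−1)²) + ν_{∞+}ν_{∞−}/(x(x−1)). -/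
set_option maxHeartbeats 2000000 in
/-- The gauge transform `ψ = x^{λ̂₀/ℏ+(ν_{0+}+ν_{0−})/2}(x−1)^{λ̂₁/ℏ+(ν_{1+}+ν_{1−})/2}φ`
of a solution `φ` of the standard Gauss hypergeometric equation (with
`α = (λ̂₀+λ̂₁+λ̂∞)/ℏ + 1/2`, `β = (λ̂₀+λ̂₁−λ̂∞)/ℏ + 1/2`, `γ = 2λ̂₀/ℏ + 1`)
satisfies the quantum Gauss curve equation on `(1,∞)`. -/
theorem stmt10 (hbar : ℝ) (hbar_ne : hbar ≠ 0)
    (l0 l1 li n0p n0m n1p n1m nip nim : ℝ)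
    (hsum : n0p + n0m + n1p + n1m + nip + nim = 1)
    (hl0 hl1 hli α β γ : ℝ)
    (hhl0 : hl0 = l0 - hbar * (n0p - n0m) / 2)
    (hhl1 : hl1 = l1 - hbar * (n1p - n1m) / 2)
    (hhli : hli = li - hbar * (nip - nim) / 2)
    (hα : α = (hl0 + hl1 + hli) / hbar + 1 / 2)
    (hβ : β = (hl0 + hl1 - hli) / hbar + 1 / 2)
    (hγ : γ = 2 * hl0 / hbar + 1)
    (φ ψ : ℝ → ℝ)
    (hφ1 : ∀ x ∈ Set.Ioi (1 : ℝ), DifferentiableAt ℝ φ x)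
    (hφ2 : ∀ x ∈ Set.Ioi (1 : ℝ), DifferentiableAt ℝ (deriv φ) x)
    (hGauss : ∀ x ∈ Set.Ioi (1 : ℝ),
      x * (1 - x) * deriv (deriv φ) x + (γ - (α + β + 1) * x) * deriv φ x
        - α * β * φ x = 0)
    (hψ : ∀ x : ℝ, ψ x = x ^ (hl0 / hbar + (n0p + n0m) / 2)
        * (x - 1) ^ (hl1 / hbar + (n1p + n1m) / 2) * φ x) :
    ∀ x ∈ Set.Ioi (1 : ℝ),
      hbar ^ 2 * deriv (deriv ψ) x
        + (hbar * ((1 - n0p - n0m) / x + (1 - n1p - n1m) / (x - 1)))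
            * hbar * deriv ψ x
        + (-(li ^ 2 * x ^ 2 - (li ^ 2 + l0 ^ 2 - l1 ^ 2) * x + l0 ^ 2)
              / (x ^ 2 * (1 - x) ^ 2)
           + hbar * (-((n0p - n0m) * l0) / (x ^ 2 * (x - 1))
                     + (n1p - n1m) * l1 / (x * (x - 1) ^ 2)
                     + (nip - nim) * li / (x * (x - 1)))
           + hbar ^ 2 * (-(n0p * n0m) / (x ^ 2 * (x - 1))
                         + n1p * n1m / (x * (x - 1) ^ 2)
                         + nip * nim / (x * (x - 1)))) * ψ x = 0 := by
  set a := hl0 / hbar + (n0p + n0m) / 2 with ha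
  set b := hl1 / hbar + (n1p + n1m) / 2 with hb
  have hfun : ψ = fun t : ℝ => t ^ a * (t - 1) ^ b * φ t := funext hψ
  have key : ∀ y ∈ Set.Ioi (1 : ℝ), HasDerivAt ψ
      (y ^ a * (y - 1) ^ b * ((a / y + b / (y - 1)) * φ y + deriv φ y)) y := by
    intro y hy
    have hy1 : (1:ℝ) < y := hy
    have hy0 : (0:ℝ) < y := lt_trans one_pos hy1
    have hym : (0:ℝ) < y - 1 := sub_pos.2 hy1
    have hA : HasDerivAt (fun t : ℝ => t ^ a) (a * y ^ (a - 1)) y :=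
      Real.hasDerivAt_rpow_const (Or.inl hy0.ne')
    have hB : HasDerivAt (fun t : ℝ => (t - 1) ^ b) (b * (y - 1) ^ (b - 1)) y := by
      simpa using ((hasDerivAt_id y).sub_const 1).rpow_const (Or.inl hym.ne')
    have hF := (hA.mul hB).mul ((hφ1 y hy).hasDerivAt)
    rw [hfun]
    refine HasDerivAt.congr_deriv hF ?_
    simp only [Pi.mul_apply]
    rw [Real.rpow_sub_one hy0.ne', Real.rpow_sub_one hym.ne']
    field_simp
  intro x hx
  have hx1 : (1:ℝ) < x := hx
  have hx0 : (0:ℝ) < x := lt_trans one_pos hx1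
  have hxm : (0:ℝ) < x - 1 := sub_pos.2 hx1
  have hx1m : (1:ℝ) - x ≠ 0 := by intro h; linarith [hxm]
  have hd1 : deriv ψ x = x ^ a * (x - 1) ^ b * ((a / x + b / (x - 1)) * φ x + deriv φ x) :=
    (key x hx).deriv
  have heq : deriv ψ =ᶠ[nhds x]
      (fun y => y ^ a * (y - 1) ^ b * ((a / y + b / (y - 1)) * φ y + deriv φ y)) := by
    filter_upwards [isOpen_Ioi.mem_nhds hx] with y hy using (key y hy).deriv
  have hA : HasDerivAt (fun t : ℝ => t ^ a) (a * x ^ (a - 1)) x :=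
    Real.hasDerivAt_rpow_const (Or.inl hx0.ne')
  have hB : HasDerivAt (fun t : ℝ => (t - 1) ^ b) (b * (x - 1) ^ (b - 1)) x := by
    simpa using ((hasDerivAt_id x).sub_const 1).rpow_const (Or.inl hxm.ne')
  have hga : HasDerivAt (fun y : ℝ => a / y) (-(a / x ^ 2)) x := by
    have := (hasDerivAt_inv hx0.ne').const_mul a
    simpa [div_eq_mul_inv] using this
  have hgb : HasDerivAt (fun y : ℝ => b / (y - 1)) (-(b / (x - 1) ^ 2)) x := by
    have := (((hasDerivAt_id x).sub_const 1).inv hxm.ne').const_mul b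
    simpa [div_eq_mul_inv] using this
  have hg : HasDerivAt (fun y => (a / y + b / (y - 1)) * φ y + deriv φ y)
      ((-(a / x ^ 2) + -(b / (x - 1) ^ 2)) * φ x
        + (a / x + b / (x - 1)) * deriv φ x + deriv (deriv φ) x) x :=
    (((hga.add hgb).mul (hφ1 x hx).hasDerivAt)).add (hφ2 x hx).hasDerivAt
  have htot := (hA.mul hB).mul hg
  have hd2 : deriv (deriv ψ) x =
      (a * x ^ (a - 1) * (x - 1) ^ b + x ^ a * (b * (x - 1) ^ (b - 1)))
        * ((a / x + b / (x - 1)) * φ x + deriv φ x)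
      + x ^ a * (x - 1) ^ b
        * ((-(a / x ^ 2) + -(b / (x - 1) ^ 2)) * φ x
            + (a / x + b / (x - 1)) * deriv φ x + deriv (deriv φ) x) := by
    rw [heq.deriv_eq]
    exact htot.deriv
  have hR : deriv (deriv φ) x =
      (α * β * φ x - (γ - (α + β + 1) * x) * deriv φ x) / (x * (1 - x)) := by
    rw [eq_div_iff (mul_ne_zero hx0.ne' hx1m)]
    linear_combination hGauss x hx
  have hnim : nim = 1 - n0p - n0m - n1p - n1m - nip := by linarith
  rw [hd2, hd1, hψ x, hR, Real.rpow_sub_one hx0.ne', Real.rpow_sub_one hxm.ne']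
  subst hnim hhl0 hhl1 hhli hα hβ hγ
  rw [ha, hb]
  field_simp
  ring
end

section
/- Let ℏ, λ₀, λ₁, λ∞, ν_{0+}, ν_{0−}, ν_{1+}, ν_{1−}, ν_{∞+}, ν_{∞−} ∈ ℝ with ν_{0+}+ν_{0−}+ν_{1+}+ν_{1−}+ν_{∞+}+ν_{∞−} = 1, and set ν_j = ν_{j+} − ν_{j−}, λ̂_j = λ_j − ℏν_j/2 for j ∈ {0,1,∞}. Define q(x) = ℏ·[(1−ν_{0+}−ν_{0−})/x + (1−ν_{1+}−ν_{1−})/(x−1)] and r(x) = −(λ∞²x² − (λ∞²+λ₀²−λ₁²)x + λ₀²)/(x²(1−x)²) + ℏ·[−(ν_{0+}−ν_{0−})λ₀/(x²(x−1)) + (ν_{1+}−ν_{1−})λ₁/(x(x−1)²) + (ν_{∞+}−ν_{∞−})λ∞/(x(x−1))] + ℏ²·[−ν_{0+}ν_{0−}/(x²(x−1)) + ν_{1+}ν_{1−}/(x(x−1)²) + ν_{∞+}ν_{∞−}/(x(x−1))]. Then for every real x ∉ {0,1}, (1/4)q(x)² − r(x) + (ℏ/2)q'(x) = (λ̂∞²x²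 − (λ̂∞²+λ̂₀²−λ̂₁²)x + λ̂₀²)/(x²(x−1)²) − ℏ²·(x²−x+1)/(4x²(x−1)²). In particular the SL-form of the quantum Gauss curve depends on the ν parameters only through the differences ν_j = ν_{j+} − ν_{j−}. -/
/-!
At the pole `x = 0` the `ℏ²`-coefficient of `q²/4 + ℏq'/2 − r` is
`((ν₀₊ + ν₀₋)² − 4ν₀₊ν₀₋ − 1)/4 = (ν₀² − 1)/4`, and likewise at `x = 1`; the constraint
`Σ ν = 1` makes the same happen at `∞`. Once `ν∞₋` is eliminated, the claim is an identity
of rational functions in `x`.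
-/

theorem hasDerivAt_mul_div_add_div_sub_one (c a b : ℝ) {x : ℝ} (hx₀ : x ≠ 0) (hx₁ : x - 1 ≠ 0) :
    HasDerivAt (fun y : ℝ => c * (a / y + b / (y - 1)))
      (c * (-a / x ^ 2 - b / (x - 1) ^ 2)) x := by
  have h₀ := (hasDerivAt_const x a).div (hasDerivAt_id' x) hx₀
  have h₁ := (hasDerivAt_const x b).div ((hasDerivAt_id' x).sub_const 1) hx₁
  exact ((h₀.add h₁).const_mul c).congr_deriv (by ring)

theorem gaussCurve_potential_eq (hbar l0 l1 li n0p n0m n1p n1m nip nim : ℝ)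
    (hsum : n0p + n0m + n1p + n1m + nip + nim = 1) {x : ℝ} (hx₀ : x ≠ 0) (hx₁ : x - 1 ≠ 0) :
    1 / 4 * (hbar * ((1 - n0p - n0m) / x + (1 - n1p - n1m) / (x - 1))) ^ 2
      - (-(li ^ 2 * x ^ 2 - (li ^ 2 + l0 ^ 2 - l1 ^ 2) * x + l0 ^ 2) / (x ^ 2 * (1 - x) ^ 2)
        + hbar * (-((n0p - n0m) * l0) / (x ^ 2 * (x - 1))
                  + (n1p - n1m) * l1 / (x * (x - 1) ^ 2)
                  + (nip - nim) * li / (x * (x - 1)))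
        + hbar ^ 2 * (-(n0p * n0m) / (x ^ 2 * (x - 1))
                      + n1p * n1m / (x * (x - 1) ^ 2)
                      + nip * nim / (x * (x - 1))))
      + hbar / 2 * (hbar * (-(1 - n0p - n0m) / x ^ 2 - (1 - n1p - n1m) / (x - 1) ^ 2)) =
        ((li - hbar * (nip - nim) / 2) ^ 2 * x ^ 2
          - ((li - hbar * (nip - nim) / 2) ^ 2 + (l0 - hbar * (n0p - n0m) / 2) ^ 2
              - (l1 - hbar * (n1p - n1m) / 2) ^ 2) * x
          + (l0 - hbar * (n0p - n0m) / 2) ^ 2) / (x ^ 2 * (x - 1) ^ 2)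
        - hbar ^ 2 * (x ^ 2 - x + 1) / (4 * x ^ 2 * (x - 1) ^ 2) := by
  obtain rfl : nim = 1 - n0p - n0m - n1p - n1m - nip := by linarith
  have hx₁' : 1 - x ≠ 0 := by rwa [← neg_sub, neg_ne_zero]
  field_simp
  ring

/-- The SL-form potential `Q = (1/4)q² − r + (ℏ/2)q'` of the quantum Gauss curve
equals `(λ̂∞²x² − (λ̂∞²+λ̂₀²−λ̂₁²)x + λ̂₀²)/(x²(x−1)²) − ℏ²(x²−x+1)/(4x²(x−1)²)`,
so it depends on the `ν` parameters only through the differences `ν_j = ν_{j+} − ν_{j−}`. -/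
theorem stmt11 (hbar l0 l1 li n0p n0m n1p n1m nip nim : ℝ)
    (hsum : n0p + n0m + n1p + n1m + nip + nim = 1)
    (q r : ℝ → ℝ)
    (hq : ∀ x : ℝ, q x = hbar * ((1 - n0p - n0m) / x + (1 - n1p - n1m) / (x - 1)))
    (hr : ∀ x : ℝ, r x =
      -(li ^ 2 * x ^ 2 - (li ^ 2 + l0 ^ 2 - l1 ^ 2) * x + l0 ^ 2)
          / (x ^ 2 * (1 - x) ^ 2)
      + hbar * (-((n0p - n0m) * l0) / (x ^ 2 * (x - 1))
                + (n1p - n1m) * l1 / (x * (x - 1) ^ 2)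
                + (nip - nim) * li / (x * (x - 1)))
      + hbar ^ 2 * (-(n0p * n0m) / (x ^ 2 * (x - 1))
                    + n1p * n1m / (x * (x - 1) ^ 2)
                    + nip * nim / (x * (x - 1)))) :
    ∀ x : ℝ, x ≠ 0 → x ≠ 1 →
      1 / 4 * q x ^ 2 - r x + hbar / 2 * deriv q x =
        ((li - hbar * (nip - nim) / 2) ^ 2 * x ^ 2
          - ((li - hbar * (nip - nim) / 2) ^ 2 + (l0 - hbar * (n0p - n0m) / 2) ^ 2
              - (l1 - hbar * (n1p - n1m) / 2) ^ 2) * x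
          + (l0 - hbar * (n0p - n0m) / 2) ^ 2) / (x ^ 2 * (x - 1) ^ 2)
        - hbar ^ 2 * (x ^ 2 - x + 1) / (4 * x ^ 2 * (x - 1) ^ 2) := by
  intro x hx₀ hx₁
  have hx₁' : x - 1 ≠ 0 := sub_ne_zero.mpr hx₁
  have hq' : HasDerivAt q
      (hbar * (-(1 - n0p - n0m) / x ^ 2 - (1 - n1p - n1m) / (x - 1) ^ 2)) x := by
    rw [show q = _ from funext hq]
    exact hasDerivAt_mul_div_add_div_sub_one _ _ _ hx₀ hx₁'
  rw [hq'.deriv, hq x, hr x]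
  exact gaussCurve_potential_eq hbar l0 l1 li n0p n0m n1p n1m nip nim hsum hx₀ hx₁'
end
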